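/- Subadditivity of degree under tensor product: let C be a category with endofunctor s and natural transformation ι : id_C → s, and let T₁, T₂ : C → Vect_K be functors to the category of vector spaces over a field K, with deg(T₁) and deg(T₂) non-negative. Then deg(T₁ ⊗ T₂) ≤ deg(T₁) + deg(T₂), where (T₁ ⊗ T₂)(c) = T₁(c) ⊗_K T₂(c). -/

import Mathlib

open CategoryTheory Limits

universe v u v' u'

/-- The natural transformation `Tι : T ⟶ Ts` (componentwise `T(ι_c) : T(c) → T(s(c))`)
induced by `ι : 𝟭 C ⟶ s`. -/
def stabNat {C : Type u} [Category.{v} C] {A : Type u'} [Category.{v'} A]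
    (s : C ⥤ C) (ι : 𝟭 C ⟶ s) (T : C ⥤ A) : T ⟶ s ⋙ T where
  app c := T.map (ι.app c)
  naturality c c' f := by
    dsimp
    rw [← T.map_comp, ← T.map_comp]
    exact congrArg T.map (ι.naturality f)

/-- `DegLE s ι d T` : the functor `T : C → A` has degree at most `d` (for
`d ∈ {-1} ∪ ℕ`), defined recursively: the only functor of degree `-1` is the zero
functor, and `T` has degree at most `d+1` iff `Tι : T ⟶ Ts` is split injective in the
functor category and the cokernel `ΔT = coker(Tι)` has degree at most `d`. -/
inductive DegLE {C : Type u} [Category.{v} C] {A : Type u'} [Category.{v'} A] [Abelian A]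
    (s : C ⥤ C) (ι : 𝟭 C ⟶ s) : ℤ → (C ⥤ A) → Prop
  | neg_one (T : C ⥤ A) (h : ∀ c : C, IsZero (T.obj c)) : DegLE s ι (-1) T
  | step (d : ℤ) (T : C ⥤ A) (r : s ⋙ T ⟶ T) (hr : stabNat s ι T ≫ r = 𝟙 T)
      (h : DegLE s ι d (cokernel (stabNat s ι T))) : DegLE s ι (d + 1) T

universe w

/-- The pointwise tensor product `(T₁ ⊗ T₂)(c) = T₁(c) ⊗_K T₂(c)` of two functors into
the category of `K`-vector spaces. -/
noncomputable def tensorFunctor {C : Type u} [Category.{v} C] {K : Type w} [Field K]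
    (T₁ T₂ : C ⥤ ModuleCat.{w} K) : C ⥤ ModuleCat.{w} K where
  obj c := MonoidalCategory.tensorObj (T₁.obj c) (T₂.obj c)
  map f := MonoidalCategory.tensorHom (T₁.map f) (T₂.map f)
  map_id c := by rw [T₁.map_id, T₂.map_id, MonoidalCategory.id_tensorHom_id]
  map_comp f g := by rw [T₁.map_comp, T₂.map_comp, ← MonoidalCategory.tensorHom_comp_tensorHom]

/-!
If `Tι` is split with cokernel `ΔT`, then `Ts ≅ T ⊕ ΔT` with `Tι` becoming the first inclusion.
Tensoring two such decompositions, `(T₁ ⊗ T₂)s ≅ (T₁ ⊕ ΔT₁) ⊗ (T₂ ⊕ ΔT₂)` splits off `T₁ ⊗ T₂`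
along `(T₁ ⊗ T₂)ι` with complement `T₁ ⊗ ΔT₂ ⊕ ΔT₁ ⊗ T₂ ⊕ ΔT₁ ⊗ ΔT₂`. By induction on the two
degrees each summand has degree at most `deg T₁ + deg T₂ - 1`, and degree is preserved by direct
sums by the same splitting argument.
-/

open MonoidalCategory

instance {C : Type u} [Category.{v} C] {A : Type u'} [Category.{v'} A] [Preadditive A]
    [MonoidalCategory A] [MonoidalPreadditive A] : MonoidalPreadditive (C ⥤ A) where
  whiskerLeft_zero := by intros; ext; exact MonoidalPreadditive.whiskerLeft_zero
  zero_whiskerRight := by intros; ext; exact MonoidalPreadditive.zero_whiskerRight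
  whiskerLeft_add := by intros; ext; exact MonoidalPreadditive.whiskerLeft_add _ _
  add_whiskerRight := by intros; ext; exact MonoidalPreadditive.add_whiskerRight _ _

section BiprodRearrangement

variable {D : Type u'} [Category.{v'} D] [Preadditive D] [HasBinaryBiproducts D]

noncomputable def biprodBiprodIso (X Q X' Q' : D) :
    (X ⊞ Q) ⊞ (X' ⊞ Q') ≅ (X ⊞ X') ⊞ (Q ⊞ Q') where
  hom := biprod.lift (biprod.map biprod.fst biprod.fst) (biprod.map biprod.snd biprod.snd)
  inv := biprod.lift (biprod.map biprod.fst biprod.fst) (biprod.map biprod.snd biprod.snd)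

theorem map_inl_inl_comp_biprodBiprodIso_hom (X Q X' Q' : D) :
    biprod.map biprod.inl biprod.inl ≫ (biprodBiprodIso X Q X' Q').hom = biprod.inl := by
  ext <;> simp [biprodBiprodIso]

variable [MonoidalCategory D] [MonoidalPreadditive D]

noncomputable def tensorBiprodIso (X₁ Q₁ X₂ Q₂ : D) :
    (X₁ ⊞ Q₁) ⊗ (X₂ ⊞ Q₂) ≅ X₁ ⊗ X₂ ⊞ (X₁ ⊗ Q₂ ⊞ (Q₁ ⊗ X₂ ⊞ Q₁ ⊗ Q₂)) where
  hom := biprod.lift (biprod.fst ⊗ₘ biprod.fst)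
    (biprod.lift (biprod.fst ⊗ₘ biprod.snd)
      (biprod.lift (biprod.snd ⊗ₘ biprod.fst) (biprod.snd ⊗ₘ biprod.snd)))
  inv := biprod.desc (biprod.inl ⊗ₘ biprod.inl)
    (biprod.desc (biprod.inl ⊗ₘ biprod.inr)
      (biprod.desc (biprod.inr ⊗ₘ biprod.inl) (biprod.inr ⊗ₘ biprod.inr)))
  hom_inv_id := by
    rw [biprod.lift_desc, biprod.lift_desc, biprod.lift_desc]
    simp only [tensorHom_comp_tensorHom]
    rw [← MonoidalPreadditive.tensor_add (biprod.snd ≫ biprod.inr), ← add_assoc,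
      ← MonoidalPreadditive.tensor_add, biprod.total, ← MonoidalPreadditive.add_tensor,
      biprod.total, id_tensorHom_id]
  inv_hom_id := by
    ext <;> simp [tensorHom_comp_tensorHom]

theorem inl_tensor_inl_comp_tensorBiprodIso_hom (X₁ Q₁ X₂ Q₂ : D) :
    (biprod.inl ⊗ₘ biprod.inl) ≫ (tensorBiprodIso X₁ Q₁ X₂ Q₂).hom = biprod.inl := by
  ext <;> simp [tensorBiprodIso, tensorHom_comp_tensorHom]

end BiprodRearrangement

section SplitMono

variable {B : Type u'} [Category.{v'} B] [Abelian B] {X Y Q : B}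

theorem exists_iso_biprod_cokernel_of_retraction (f : X ⟶ Y) (r : Y ⟶ X) (hr : f ≫ r = 𝟙 X) :
    ∃ φ : Y ≅ X ⊞ cokernel f, f ≫ φ.hom = biprod.inl := by
  let S := ShortComplex.mk f (cokernel.π f) (cokernel.condition f)
  let σ := ShortComplex.Splitting.ofExactOfRetraction S
    (S.exact_of_g_is_cokernel (cokernelIsCokernel f)) r hr inferInstance
  exact ⟨σ.isoBinaryBiproduct, by ext <;> simp [S, σ.f_r]⟩

noncomputable def cokernelIsoOfIsoBiprod {f : X ⟶ Y} (φ : Y ≅ X ⊞ Q)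
    (hφ : f ≫ φ.hom = biprod.inl) : cokernel f ≅ Q :=
  cokernel.mapIso f biprod.inl (Iso.refl X) φ (by simpa using hφ) ≪≫ cokernelBiprodInlIso

end SplitMono

section StabNat

variable {C : Type u} [Category.{v} C] {A : Type u'} [Category.{v'} A] (s : C ⥤ C) (ι : 𝟭 C ⟶ s)

theorem stabNat_naturality {T T' : C ⥤ A} (α : T ⟶ T') :
    stabNat s ι T ≫ Functor.whiskerLeft s α = α ≫ stabNat s ι T' := by
  ext c
  exact α.naturality (ι.app c)

variable [Preadditive A] [HasBinaryBiproducts A]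

noncomputable def whiskerLeftBiprodIso (T T' : C ⥤ A) : s ⋙ (T ⊞ T') ≅ (s ⋙ T) ⊞ (s ⋙ T') where
  hom := biprod.lift (Functor.whiskerLeft s biprod.fst) (Functor.whiskerLeft s biprod.snd)
  inv := biprod.desc (Functor.whiskerLeft s biprod.inl) (Functor.whiskerLeft s biprod.inr)
  hom_inv_id := by
    ext c
    simp only [biprod.lift_desc, NatTrans.app_add, NatTrans.comp_app, Functor.whiskerLeft_app]
    rw [← NatTrans.comp_app, ← NatTrans.comp_app, ← NatTrans.app_add, biprod.total]
    rfl
  inv_hom_id := by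
    apply biprod.hom_ext' <;> apply biprod.hom_ext <;> simp [← Functor.whiskerLeft_comp] <;> rfl

theorem stabNat_biprod (T T' : C ⥤ A) :
    stabNat s ι (T ⊞ T') ≫ (whiskerLeftBiprodIso s T T').hom
      = biprod.map (stabNat s ι T) (stabNat s ι T') := by
  apply biprod.hom_ext <;> simp [whiskerLeftBiprodIso, stabNat_naturality]

/-- `Q` is a complement of the split mono `Tι : T ⟶ Ts`; necessarily `Q ≅ ΔT`. -/
def IsStabComplement (T Q : C ⥤ A) : Prop :=
  ∃ φ : s ⋙ T ≅ T ⊞ Q, stabNat s ι T ≫ φ.hom = biprod.inl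

variable {s ι}

theorem IsStabComplement.biprod {T Q T' Q' : C ⥤ A} (h : IsStabComplement s ι T Q)
    (h' : IsStabComplement s ι T' Q') : IsStabComplement s ι (T ⊞ T') (Q ⊞ Q') := by
  obtain ⟨φ, hφ⟩ := h
  obtain ⟨φ', hφ'⟩ := h'
  refine ⟨whiskerLeftBiprodIso s T T' ≪≫ biprod.mapIso φ φ' ≪≫ biprodBiprodIso T Q T' Q', ?_⟩
  rw [Iso.trans_hom, Iso.trans_hom, ← Category.assoc, stabNat_biprod]
  apply biprod.hom_ext <;> apply biprod.hom_ext <;>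
    simp [biprodBiprodIso, reassoc_of% hφ, reassoc_of% hφ']

theorem IsStabComplement.tensor [MonoidalCategory A] [MonoidalPreadditive A]
    {T₁ Q₁ T₂ Q₂ : C ⥤ A} (h₁ : IsStabComplement s ι T₁ Q₁)
    (h₂ : IsStabComplement s ι T₂ Q₂) :
    IsStabComplement s ι (T₁ ⊗ T₂) (T₁ ⊗ Q₂ ⊞ (Q₁ ⊗ T₂ ⊞ Q₁ ⊗ Q₂)) := by
  obtain ⟨φ₁, hφ₁⟩ := h₁
  obtain ⟨φ₂, hφ₂⟩ := h₂
  refine ⟨(φ₁ ⊗ᵢ φ₂ : s ⋙ (T₁ ⊗ T₂) ≅ _) ≪≫ tensorBiprodIso T₁ Q₁ T₂ Q₂, ?_⟩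
  -- `(T₁ ⊗ T₂)s = T₁s ⊗ T₂s` and `(T₁ ⊗ T₂)ι = T₁ι ⊗ T₂ι` hold definitionally.
  change (stabNat s ι T₁ ⊗ₘ stabNat s ι T₂) ≫ (φ₁.hom ⊗ₘ φ₂.hom) ≫ _ = _
  rw [← Category.assoc, tensorHom_comp_tensorHom, hφ₁, hφ₂,
    inl_tensor_inl_comp_tensorBiprodIso_hom]

end StabNat

section Degree

variable {C : Type u} [Category.{v} C] {A : Type u'} [Category.{v'} A] [Abelian A]
  {s : C ⥤ C} {ι : 𝟭 C ⟶ s}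

theorem DegLE.neg_one_le {e : ℤ} {T : C ⥤ A} (h : DegLE s ι e T) : -1 ≤ e := by
  induction h <;> omega

theorem DegLE.isZero {T : C ⥤ A} (h : DegLE s ι (-1) T) : IsZero T := by
  generalize he : (-1 : ℤ) = e at h
  cases h with
  | neg_one _ hT => exact Functor.isZero _ hT
  | step d _ _ _ hΔ => have := hΔ.neg_one_le; omega

theorem DegLE.of_iso {e : ℤ} {T T' : C ⥤ A} (h : DegLE s ι e T) (φ : T ≅ T') :
    DegLE s ι e T' := by
  induction h generalizing T' with
  | neg_one T hT => exact DegLE.neg_one T' fun c => (hT c).of_iso (φ.symm.app c)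
  | step d T r hr hΔ ih =>
    refine DegLE.step d T' (Functor.whiskerLeft s φ.inv ≫ r ≫ φ.hom) ?_ ?_
    · rw [← Category.assoc, stabNat_naturality, Category.assoc, reassoc_of% hr, Iso.inv_hom_id]
    · exact ih (cokernel.mapIso _ _ φ (Functor.isoWhiskerLeft s φ) (stabNat_naturality s ι φ.hom))

theorem DegLE.zero_of_isZero {T : C ⥤ A} (hT : IsZero T) : DegLE s ι 0 T := by
  have hsT : IsZero (s ⋙ T) := ((Functor.whiskeringLeft C C A).obj s).map_isZero hT
  refine DegLE.step (-1) T 0 (hT.eq_of_src _ _) (DegLE.neg_one _ ?_)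
  exact (Functor.isZero_iff _).1 (hsT.of_epi (cokernel.π _))

theorem DegLE.succ {e : ℤ} {T : C ⥤ A} (h : DegLE s ι e T) : DegLE s ι (e + 1) T := by
  induction h with
  | neg_one T hT => exact zero_of_isZero (Functor.isZero _ hT)
  | step d T r hr _ ih => exact DegLE.step (d + 1) T r hr ih

theorem DegLE.mono {e e' : ℤ} {T : C ⥤ A} (h : DegLE s ι e T) (hle : e ≤ e') :
    DegLE s ι e' T := by
  induction e', hle using Int.leInduction with
  | base => exact h
  | succ _ _ ih => exact ih.succ

theorem DegLE.of_isZero {e : ℤ} {T : C ⥤ A} (hT : IsZero T) (he : -1 ≤ e) : DegLE s ι e T :=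
  (DegLE.neg_one T ((Functor.isZero_iff T).1 hT)).mono he

theorem IsStabComplement.degLE_succ {e : ℤ} {T Q : C ⥤ A} (hTQ : IsStabComplement s ι T Q)
    (hQ : DegLE s ι e Q) : DegLE s ι (e + 1) T := by
  obtain ⟨φ, hφ⟩ := hTQ
  exact DegLE.step e T (φ.hom ≫ biprod.fst) (by rw [reassoc_of% hφ, biprod.inl_fst])
    (hQ.of_iso (cokernelIsoOfIsoBiprod φ hφ).symm)

theorem isStabComplement_cokernel {T : C ⥤ A} (r : s ⋙ T ⟶ T)
    (hr : stabNat s ι T ≫ r = 𝟙 T) : IsStabComplement s ι T (cokernel (stabNat s ι T)) :=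
  exists_iso_biprod_cokernel_of_retraction _ r hr

theorem DegLE.exists_isStabComplement {e : ℤ} {T : C ⥤ A} (h : DegLE s ι (e + 1) T)
    (he : -1 ≤ e) : ∃ Q, DegLE s ι e Q ∧ IsStabComplement s ι T Q := by
  generalize hn : e + 1 = n at h
  cases h with
  | neg_one => omega
  | step d _ r hr hΔ =>
    obtain rfl : d = e := by omega
    exact ⟨_, hΔ, isStabComplement_cokernel r hr⟩

theorem DegLE.biprod {e : ℤ} {T T' : C ⥤ A} (h : DegLE s ι e T) (h' : DegLE s ι e T') :
    DegLE s ι e (T ⊞ T') := by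
  induction h generalizing T' with
  | neg_one T hT =>
    exact DegLE.neg_one _ ((Functor.isZero_iff _).1
      ((biprod_isZero_iff _ _).2 ⟨Functor.isZero _ hT, h'.isZero⟩))
  | step d T r hr hΔ ih =>
    obtain ⟨Q', hQ', hTQ'⟩ := h'.exists_isStabComplement hΔ.neg_one_le
    exact ((isStabComplement_cokernel r hr).biprod hTQ').degLE_succ (ih hQ')

-- The `max` only matters when both factors are zero, i.e. `e₁ + e₂ = -2`.
theorem DegLE.tensor [MonoidalCategory A] [MonoidalPreadditive A] {e₁ e₂ : ℤ} {T₁ T₂ : C ⥤ A}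
    (h₁ : DegLE s ι e₁ T₁) (h₂ : DegLE s ι e₂ T₂) :
    DegLE s ι (max (-1) (e₁ + e₂)) (T₁ ⊗ T₂) := by
  induction h₁ generalizing e₂ T₂ with
  | neg_one T₁ hT₁ =>
    exact of_isZero ((tensorRight T₂).map_isZero (Functor.isZero _ hT₁)) (le_max_left _ _)
  | step d₁ T₁ r₁ hr₁ hΔ₁ ih₁ =>
    induction h₂ with
    | neg_one T₂ hT₂ =>
      exact of_isZero ((tensorLeft T₁).map_isZero (Functor.isZero _ hT₂)) (le_max_left _ _)
    | step d₂ T₂ r₂ hr₂ hΔ₂ ih₂ =>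
      have := hΔ₁.neg_one_le
      have := hΔ₂.neg_one_le
      have hT₁Q₂ := ih₂.mono (e' := d₁ + d₂ + 1) (by omega)
      have hQ₁T₂ := (ih₁ (DegLE.step d₂ T₂ r₂ hr₂ hΔ₂)).mono (e' := d₁ + d₂ + 1) (by omega)
      have hQ₁Q₂ := (ih₁ hΔ₂).mono (e' := d₁ + d₂ + 1) (by omega)
      have hT₁T₂ := ((isStabComplement_cokernel r₁ hr₁).tensor
        (isStabComplement_cokernel r₂ hr₂)).degLE_succ (hT₁Q₂.biprod (hQ₁T₂.biprod hQ₁Q₂))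
      exact hT₁T₂.mono (by omega)

end Degree

/-- Subadditivity of degree under tensor product: for functors `T₁, T₂ : C → Vect_K`
with non-negative degrees `deg(T₁) ≤ d₁` and `deg(T₂) ≤ d₂`, the pointwise tensor
product satisfies `deg(T₁ ⊗ T₂) ≤ d₁ + d₂`. -/
theorem degree_tensor_subadditive {C : Type u} [Category.{v} C] {K : Type w} [Field K]
    (s : C ⥤ C) (ι : 𝟭 C ⟶ s) (T₁ T₂ : C ⥤ ModuleCat.{w} K) (d₁ d₂ : ℕ)
    (h₁ : DegLE s ι (d₁ : ℤ) T₁) (h₂ : DegLE s ι (d₂ : ℤ) T₂) :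
    DegLE s ι ((d₁ : ℤ) + (d₂ : ℤ)) (tensorFunctor T₁ T₂) := by
  change DegLE s ι _ (T₁ ⊗ T₂)
  exact (h₁.tensor h₂).mono (by omega)
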